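/- One has F̂(π_L(1+ε)) ≡ π_K modulo the ideal π_L^n · I_F of O_L[[ε]], where I_F is the ideal generated by π_L^{i_0} ε, π_L^{i_1} ε^p, …, π_L^{i_ν} ε^{p^ν}. Equivalently, there exist r_0,…,r_ν ∈ R and δ_F ∈ (π_L, ε)·I_F such that F̂(π_L(1+ε)) = π_K·(1 + Σ_{j=0}^{ν} r_j π_L^{i_j} ε^{p^j} + δ_F). -/

import Mathlib

/-!
Expanding `F̂(π_L(1+ε)) = Σ_t a_t π_L^(t+n) (1+ε)^(t+n)`, the coefficient of `ε^i` is
`Σ_t a_t π_L^(t+n) binom(t+n, i)`. Let `p^j ≤ i` with `j = ν` or `v_p(i) ≤ j`. For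
`j₁ = max j (min (v_p(t+n)) ν)` one has `ĩ_{j₁} ≤ t` whenever `a_t ≠ 0`, and
`p^(j₁-j) ∣ binom(t+n, i)` because `v_p(t+n) ≤ v_p(binom(t+n, i)) + v_p(i)`; since
`i_j ≤ ĩ_{j₁} + (j₁-j) v_L(p)`, every term is divisible by `π_L^(n+i_j)`. Sorting the
coefficients into the ranges `p^j ≤ i < p^(j+1)` (the last one unbounded) writes
`F̂(π_L(1+ε)) - π_K` as `Σ_j π_L^(n+i_j) ε^(p^j) g_j`, which is the first claim. For the second,
write `π_L^n = π_K u` and reduce each `u g_j` modulo `(π_L, ε)` to a Teichmüller representative.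
-/

open scoped ENNReal

noncomputable section

/-- The additive valuation (with respect to powers of the prime element `π`) of an
element `x` of a discrete valuation ring: the largest `k` with `x ∈ (π^k)`
(`⊤` if `x = 0`). -/
def piVal {A : Type*} [CommRing A] (π : A) (x : A) : ℕ∞ :=
  ⨆ k ∈ {k : ℕ | x ∈ Ideal.span {π ^ k}}, (k : ℕ∞)

/-- `ĩ_j = min {h ≥ 0 : v_p(h+n) ≤ j, a_h ≠ 0}` (`⊤` if no such `h` exists), where
`a_h` are the coefficients of the series `F̂(X) = Σ a_h X^{h+n}` with `π_K = F̂(π_L)`. -/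
def itilde (p n : ℕ) {OK : Type*} [CommRing OK] (aF : ℕ → OK) (j : ℕ) : ℕ∞ :=
  ⨅ h ∈ {h : ℕ | padicValNat p (h + n) ≤ j ∧ aF h ≠ 0}, (h : ℕ∞)

/-- The `j`-th index of inseparability (closed form of the recursion
`i_ν = ĩ_ν = 0`, `i_j = min(ĩ_j, i_{j+1} + v_L(p))`):
`i_j = min {ĩ_{j₁} + (j₁−j)·v_L(p) : j ≤ j₁ ≤ ν}`.  Here `vLp = v_L(p)`. -/
def insepIdx (p n ν : ℕ) {OK : Type*} [CommRing OK] (aF : ℕ → OK) (vLp : ℕ∞) (j : ℕ) : ℕ∞ :=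
  ⨅ j1 ∈ Set.Icc j ν, (itilde p n aF j1 + ((j1 - j : ℕ) : ℕ∞) * vLp)

/-- The generalized Hasse–Herbrand function
`φ^j_{L/K}(x) = min {i_{j₀} + p^{j₀} x : 0 ≤ j₀ ≤ j}`, given the (finite,
natural-number valued) indices of inseparability `iL`. -/
def hhPhi (p : ℕ) (iL : ℕ → ℕ) (j : ℕ) (x : ℝ) : ℝ :=
  sInf {y : ℝ | ∃ j0 ≤ j, y = iL j0 + (p : ℝ) ^ j0 * x}

theorem padicValNat_le_padicValNat_choose_add {p : ℕ} [Fact p.Prime] {m i : ℕ} (hi : i ≠ 0)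
    (him : i ≤ m) : padicValNat p m ≤ padicValNat p (m.choose i) + padicValNat p i := by
  obtain ⟨m, rfl⟩ : ∃ m', m = m' + 1 := ⟨m - 1, by omega⟩
  obtain ⟨i, rfl⟩ : ∃ i', i = i' + 1 := ⟨i - 1, by omega⟩
  have key := congrArg (padicValNat p) (Nat.add_one_mul_choose_eq m i)
  rw [padicValNat.mul (by omega) (Nat.choose_pos (by omega)).ne',
    padicValNat.mul (Nat.choose_pos him).ne' (by omega)] at key
  omega

theorem padicValNat_mul_pow_of_not_dvd {p a ν : ℕ} [hp : Fact p.Prime] (hpa : ¬p ∣ a) :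
    padicValNat p (a * p ^ ν) = ν := by
  rw [padicValNat.mul (by rintro rfl; exact hpa (dvd_zero p)) (pow_ne_zero _ hp.out.ne_zero),
    padicValNat.eq_zero_of_not_dvd hpa, padicValNat.prime_pow, zero_add]

section piVal

variable {A : Type*} [CommRing A] {π x : A}

theorem pow_dvd_of_le_piVal {k : ℕ} (h : (k : ℕ∞) ≤ piVal π x) : π ^ k ∣ x := by
  by_contra hk
  have hlt : ∀ m, x ∈ Ideal.span {π ^ m} → m + 1 ≤ k := fun m hm => by
    by_contra hmk
    exact hk ((pow_dvd_pow π (by omega)).trans (Ideal.mem_span_singleton.1 hm))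
  have hk1 : 1 ≤ k := hlt 0 (by simp)
  have hle : piVal π x ≤ ((k - 1 : ℕ) : ℕ∞) :=
    iSup₂_le fun m hm => by exact_mod_cast (by have := hlt m hm; omega : m ≤ k - 1)
  have : k ≤ k - 1 := by exact_mod_cast h.trans hle
  omega

theorem pow_dvd_pow_mul_pow_of_le_add_mul_piVal {s t m : ℕ}
    (h : (s : ℕ∞) ≤ t + m * piVal π x) : π ^ s ∣ π ^ t * x ^ m := by
  cases hv : piVal π x with
  | top =>
    rcases eq_or_ne m 0 with rfl | hm
    · simp only [CharP.cast_eq_zero, zero_mul, add_zero, Nat.cast_le] at h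
      simpa using pow_dvd_pow π h
    · exact ((pow_dvd_of_le_piVal (hv ▸ le_top)).trans (dvd_pow_self x hm)).mul_left _
  | coe v =>
    rw [hv] at h
    have hst : s ≤ t + m * v := by exact_mod_cast h
    calc π ^ s ∣ π ^ (t + m * v) := pow_dvd_pow π hst
      _ = π ^ t * (π ^ v) ^ m := by rw [pow_add, ← pow_mul, mul_comm m]
      _ ∣ π ^ t * x ^ m := mul_dvd_mul_left _ (pow_dvd_pow_of_dvd (pow_dvd_of_le_piVal hv.ge) m)

end piVal

section insepIdx

variable {p n ν : ℕ} {OK : Type*} [CommRing OK] {aF : ℕ → OK}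

theorem itilde_le {j t : ℕ} (hj : padicValNat p (t + n) ≤ j) (ht : aF t ≠ 0) :
    itilde p n aF j ≤ t :=
  iInf₂_le t ⟨hj, ht⟩

theorem insepIdx_le_itilde_add {vLp : ℕ∞} {j j₁ : ℕ} (hj : j ≤ j₁) (hj₁ : j₁ ≤ ν) :
    insepIdx p n ν aF vLp j ≤ itilde p n aF j₁ + ((j₁ - j : ℕ) : ℕ∞) * vLp :=
  iInf₂_le j₁ ⟨hj, hj₁⟩

theorem exists_pow_dvd_choose_and_insepIdx_le [Fact p.Prime] (hn : padicValNat p n ≤ ν)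
    (ha0 : aF 0 ≠ 0) (vLp : ℕ∞) {j i t : ℕ} (hjν : j ≤ ν) (hi : i ≠ 0)
    (hij : j < ν → padicValNat p i ≤ j) (ht : aF t ≠ 0) :
    ∃ m : ℕ, p ^ m ∣ (t + n).choose i ∧ insepIdx p n ν aF vLp j ≤ t + (m : ℕ∞) * vLp := by
  set e := padicValNat p (t + n)
  set j₁ := max j (min e ν)
  have hitilde : itilde p n aF j₁ ≤ t := by
    by_cases he : e ≤ j₁
    · exact itilde_le he ht
    · have hj₁ : j₁ = ν := by omega
      exact (itilde_le (by simpa [hj₁] using hn) ha0).trans (by simp)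
  have hinsep : insepIdx p n ν aF vLp j ≤ itilde p n aF j₁ + ((j₁ - j : ℕ) : ℕ∞) * vLp :=
    insepIdx_le_itilde_add (le_max_left _ _) (max_le hjν (min_le_right _ _))
  refine ⟨j₁ - j, ?_, hinsep.trans (by gcongr)⟩
  rcases eq_or_ne (j₁ - j) 0 with h0 | h0
  · simp [h0]
  rcases le_or_gt i (t + n) with hin | hin
  · rw [padicValNat_dvd_iff_le (Nat.choose_pos hin).ne']
    have := padicValNat_le_padicValNat_choose_add (p := p) hi hin
    have := hij (by omega)
    omega
  · simp [Nat.choose_eq_zero_of_lt hin]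

end insepIdx

theorem ne_zero_of_sub_mul_pow_mem_span {R : Type*} [CommRing R] [IsDomain R] {π c b : R}
    {n : ℕ} (hπ : Irreducible π) (hc : Associated c (π ^ n))
    (h : c - b * π ^ n ∈ Ideal.span {π ^ (n + 1)}) : b ≠ 0 := by
  rintro rfl
  rw [zero_mul, sub_zero, Ideal.mem_span_singleton, hc.dvd_iff_dvd_right,
    pow_dvd_pow_iff hπ.ne_zero hπ.not_isUnit] at h
  omega

theorem eq_of_forall_sub_mem_span_pow {R : Type*} [CommRing R] [IsDomain R]
    [IsDiscreteValuationRing R] {π : R} (hπ : Irreducible π) {x y : R}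
    (h : ∀ k : ℕ, x - y ∈ Ideal.span {π ^ k}) : x = y := by
  have hKrull := Ideal.iInf_pow_eq_bot_of_isLocalRing (IsLocalRing.maximalIdeal R)
    (IsLocalRing.maximalIdeal.isMaximal R).ne_top
  rw [(IsDiscreteValuationRing.irreducible_iff_uniformizer π).mp hπ] at hKrull
  simp only [Ideal.span_singleton_pow] at hKrull
  rw [← sub_eq_zero, ← Ideal.mem_bot, ← hKrull, Ideal.mem_iInf]
  exact h

theorem algebraMap_mem_span_of_dvd {R A : Type*} [CommRing R] [IsDomain R]
    [IsDiscreteValuationRing R] [CommRing A] [Algebra R A] {π : R} (hπ : Irreducible π) {ϖ : A}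
    (hdvd : ϖ ∣ algebraMap R A π) {y : R} (hy : y ∈ IsLocalRing.maximalIdeal R) :
    algebraMap R A y ∈ Ideal.span {ϖ} := by
  rw [(IsDiscreteValuationRing.irreducible_iff_uniformizer π).mp hπ] at hy
  obtain ⟨z, rfl⟩ := Ideal.mem_span_singleton'.1 hy
  rw [map_mul, Ideal.mem_span_singleton]
  exact hdvd.mul_left _

theorem IsLocalRing.exists_mem_sub_algebraMap_mem {R A : Type*} [CommRing R] [IsLocalRing R]
    [CommRing A] [Algebra R A] {S : Set R} (hS : Set.SurjOn (residue R) S Set.univ)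
    {I : Ideal A} (hmax : ∀ y ∈ maximalIdeal R, algebraMap R A y ∈ I)
    (hres : ∀ x, ∃ y, x - algebraMap R A y ∈ I) (x : A) :
    ∃ r ∈ S, x - algebraMap R A r ∈ I := by
  obtain ⟨y, hy⟩ := hres x
  obtain ⟨r, hr, hry⟩ := hS (Set.mem_univ (residue R y))
  refine ⟨r, hr, ?_⟩
  have hyr : y - r ∈ maximalIdeal R := by rw [← residue_eq_zero_iff, map_sub, hry, sub_self]
  simpa [map_sub] using I.add_mem hy (hmax _ hyr)

namespace PowerSeries

variable {R : Type*} [CommRing R]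

theorem exists_eq_C_mul_X_pow_mul {c : R} {k : ℕ} {f : R⟦X⟧}
    (hlow : ∀ i < k, coeff i f = 0) (hdvd : ∀ i, c ∣ coeff i f) :
    ∃ g, f = C c * X ^ k * g := by
  choose e he using hdvd
  refine ⟨mk fun i => e (i + k), ?_⟩
  ext i
  rw [mul_assoc, coeff_C_mul, coeff_X_pow_mul', coeff_mk]
  split_ifs with hki
  · rw [Nat.sub_add_cancel hki, he]
  · rw [mul_zero, hlow i (by omega)]

theorem exists_eq_sum_C_mul_X_pow_mul (p ν : ℕ) (c : ℕ → R) {f : R⟦X⟧}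
    (h0 : constantCoeff f = 0) (hdvd : ∀ i ≠ 0, c (min ν (Nat.log p i)) ∣ coeff i f) :
    ∃ g : ℕ → R⟦X⟧, f = ∑ j ∈ Finset.range (ν + 1), C (c j) * X ^ (p ^ j) * g j := by
  classical
  let slice (j : ℕ) : R⟦X⟧ :=
    mk fun i => if i ≠ 0 ∧ min ν (Nat.log p i) = j then coeff i f else 0
  have hsum : f = ∑ j ∈ Finset.range (ν + 1), slice j := by
    ext i
    rw [map_sum]
    rcases eq_or_ne i 0 with rfl | hi
    · simp [slice, h0]
    · simp [slice, hi, Finset.sum_ite_eq]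
  have hslice (j : ℕ) : ∃ g, slice j = C (c j) * X ^ (p ^ j) * g := by
    refine exists_eq_C_mul_X_pow_mul (fun i hi => ?_) (fun i => ?_)
    · simp only [slice, coeff_mk]
      refine if_neg fun ⟨hi0, hij⟩ => ?_
      have := Nat.pow_le_of_le_log hi0 (min_le_right ν (Nat.log p i))
      rw [hij] at this
      omega
    · simp only [slice, coeff_mk]
      split_ifs with h
      · exact h.2 ▸ hdvd i h.1
      · exact dvd_zero _
  choose g hg using hslice
  exact ⟨g, hsum.trans (Finset.sum_congr rfl fun j _ => hg j)⟩

theorem exists_eq_C_add_mem_span {R' : Type*} [CommRing R'] (φ : R' →+* R) {S : Set R'}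
    {π : R} (hS : ∀ x, ∃ r ∈ S, x - φ r ∈ Ideal.span {π}) (g : R⟦X⟧) :
    ∃ r ∈ S, ∃ δ ∈ Ideal.span {C π, X}, g = C (φ r) + δ := by
  obtain ⟨r, hr, hgr⟩ := hS (constantCoeff g)
  obtain ⟨s, hs⟩ := Ideal.mem_span_singleton'.1 hgr
  refine ⟨r, hr, C π * C s + X * mk fun m => coeff (m + 1) g, ?_, ?_⟩
  · exact Ideal.add_mem _ (Ideal.mul_mem_right _ _ (Ideal.subset_span (by simp)))
      (Ideal.mul_mem_right _ _ (Ideal.subset_span (by simp)))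
  · conv_lhs => rw [eq_X_mul_shift_add_const g]
    rw [← map_mul, mul_comm π, hs, map_sub]
    ring

theorem exists_eq_C_mul_one_add_sum_add_mem {R' : Type*} [CommRing R'] (φ : R' →+* R)
    {S : Set R'} {π c u : R} (hS : ∀ x, ∃ r ∈ S, x - φ r ∈ Ideal.span {π}) {I : Ideal R⟦X⟧}
    {s : Finset ℕ} {e : ℕ → R} {k : ℕ → ℕ} (hI : ∀ j ∈ s, C (e j) * X ^ k j ∈ I)
    {f : R⟦X⟧} {g : ℕ → R⟦X⟧} (hf : f = C c + ∑ j ∈ s, C (c * u * e j) * X ^ k j * g j) :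
    ∃ r : ℕ → R', (∀ j, r j ∈ S) ∧ ∃ δ ∈ Ideal.span {C π, X} * I,
      f = C c * (1 + ∑ j ∈ s, C (φ (r j) * e j) * X ^ k j + δ) := by
  choose r hr δ hδ hrδ using fun j => exists_eq_C_add_mem_span φ hS (C u * g j)
  refine ⟨r, hr, ∑ j ∈ s, δ j * (C (e j) * X ^ k j),
    Ideal.sum_mem _ fun j hj => Ideal.mul_mem_mul (hδ j) (hI j hj), ?_⟩
  rw [hf, mul_add, mul_add, mul_one, Finset.mul_sum, Finset.mul_sum, add_assoc,
    ← Finset.sum_add_distrib]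
  refine congrArg _ (Finset.sum_congr rfl fun j _ => ?_)
  rw [map_mul, map_mul, map_mul]
  linear_combination (C c * C (e j) * X ^ k j) * hrδ j

end PowerSeries

theorem pow_add_dvd_coeff_of_le_insepIdx {p : ℕ} [Fact p.Prime] {n ν : ℕ} {OK OL : Type*}
    [CommRing OK] [CommRing OL] [Algebra OK OL] (hn : padicValNat p n ≤ ν) {aF : ℕ → OK}
    (ha0 : aF 0 ≠ 0) {πL : OL} {FF : PowerSeries OL}
    (hFF : ∀ i N : ℕ, PowerSeries.coeff i FF - ∑ t ∈ Finset.range N,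
      algebraMap OK OL (aF t) * πL ^ (t + n) * ((t + n).choose i : OL) ∈ Ideal.span {πL ^ (n + N)})
    {s j i : ℕ} (hs : (s : ℕ∞) ≤ insepIdx p n ν aF (piVal πL (p : OL)) j) (hjν : j ≤ ν)
    (hi : i ≠ 0) (hij : j < ν → padicValNat p i ≤ j) :
    πL ^ (n + s) ∣ PowerSeries.coeff i FF := by
  have hterm (t : ℕ) :
      πL ^ (n + s) ∣ algebraMap OK OL (aF t) * πL ^ (t + n) * ((t + n).choose i : OL) := by
    by_cases ht : aF t = 0
    · simp [ht]
    obtain ⟨m, hm, hle⟩ :=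
      exists_pow_dvd_choose_and_insepIdx_le hn ha0 (piVal πL (p : OL)) hjν hi hij ht
    have hcast : (p : OL) ^ m ∣ ((t + n).choose i : OL) := by exact_mod_cast Nat.cast_dvd_cast hm
    calc πL ^ (n + s) ∣ πL ^ n * (πL ^ t * ((t + n).choose i : OL)) := by
          rw [pow_add]
          exact mul_dvd_mul_left _ ((pow_dvd_pow_mul_pow_of_le_add_mul_piVal (hs.trans hle)).trans
            (mul_dvd_mul_left _ hcast))
      _ ∣ _ := ⟨algebraMap OK OL (aF t), by ring⟩
  have := Ideal.add_mem _ (hFF i s)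
    (Ideal.sum_mem _ fun t (_ : t ∈ Finset.range s) => Ideal.mem_span_singleton.2 (hterm t))
  rwa [sub_add_cancel, Ideal.mem_span_singleton] at this

open PowerSeries in
theorem stmt18_general
    (p : ℕ) [hp : Fact p.Prime]
    -- the ring of integers of K : complete DVR with perfect residue field of char p
    (OK : Type) [CommRing OK] [IsDomain OK] [IsDiscreteValuationRing OK]
    -- the ring of integers of L
    (OL : Type) [CommRing OL] [IsDomain OL] [IsDiscreteValuationRing OL]
    [Algebra OK OL]
    -- L/K is finite separable of degree n = a·p^ν with p ∤ a, n > 1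
    (n a ν : ℕ) (hna : n = a * p ^ ν) (hpa : ¬ p ∣ a) (hn1 : 1 < n)
    -- uniformizers; L/K is totally ramified
    (πK : OK) (hπK : Irreducible πK) (πL : OL) (hπL : Irreducible πL)
    (htot : Associated (algebraMap OK OL πK) (πL ^ n))
    (hres : ∀ x : OL, ∃ y : OK, x - algebraMap OK OL y ∈ IsLocalRing.maximalIdeal OL)
    -- Teichmüller representatives
    (TR : Set OK)
    (hTRbij : Set.BijOn (IsLocalRing.residue OK) TR Set.univ)
    -- the series F̂(X) = Σ_h a_h X^{h+n} with π_K = F̂(π_L)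
    (aF : ℕ → OK)
    (hFeval : ∀ N : ℕ,
      algebraMap OK OL πK - ∑ h ∈ Finset.range N, algebraMap OK OL (aF h) * πL ^ (h + n)
        ∈ Ideal.span {πL ^ (n + N)})
    -- the indices of inseparability (finite since L/K is separable)
    (iL : ℕ → ℕ)
    (hiL : ∀ j ≤ ν, (iL j : ℕ∞) = insepIdx p n ν aF (piVal πL (p : OL)) j)
    -- FF = F̂(π_L(1+ε)) ∈ O_L[[ε]], coefficientwise (as a π_L-adic limit)
    (FF : PowerSeries OL)
    (hFFcoeff : ∀ i N : ℕ,
      PowerSeries.coeff (R := OL) i FF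
          - ∑ t ∈ Finset.range N,
              algebraMap OK OL (aF t) * πL ^ (t + n) * ((t + n).choose i : OL)
        ∈ Ideal.span {πL ^ (n + N)}) :
    (FF - (C (R := OL)) (algebraMap OK OL πK) ∈
        Ideal.span {(C (R := OL)) (πL ^ n)} *
          Ideal.span {f : PowerSeries OL | ∃ j ≤ ν,
            f = (C (R := OL)) (πL ^ iL j) * (X : PowerSeries OL) ^ (p ^ j)}) ∧
    (∃ r : ℕ → OK, (∀ j ≤ ν, r j ∈ TR) ∧
      ∃ δF ∈ Ideal.span {(C (R := OL)) πL, (X : PowerSeries OL)} *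
          Ideal.span {f : PowerSeries OL | ∃ j ≤ ν,
            f = (C (R := OL)) (πL ^ iL j) * (X : PowerSeries OL) ^ (p ^ j)},
        FF = (C (R := OL)) (algebraMap OK OL πK) *
          (1 + ∑ j ∈ Finset.range (ν + 1),
              (C (R := OL)) (algebraMap OK OL (r j) * πL ^ iL j) * (X : PowerSeries OL) ^ (p ^ j)
            + δF)) := by
  obtain ⟨u, hu⟩ := htot
  have hν : padicValNat p n = ν := hna ▸ padicValNat_mul_pow_of_not_dvd hpa
  have ha0 : aF 0 ≠ 0 := fun h =>
    ne_zero_of_sub_mul_pow_mem_span hπL ⟨u, hu⟩ (by simpa using hFeval 1) (by simp [h])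
  have hFF0 : constantCoeff FF = algebraMap OK OL πK :=
    eq_of_forall_sub_mem_span_pow hπL fun k =>
      Ideal.span_singleton_le_span_singleton.2 (pow_dvd_pow _ (Nat.le_add_left k n))
        (by simpa using Ideal.sub_mem _ (hFFcoeff 0 k) (hFeval k))
  obtain ⟨g, hg⟩ := exists_eq_sum_C_mul_X_pow_mul p ν
    (fun j => algebraMap OK OL πK * u * πL ^ iL j) (f := FF - C (algebraMap OK OL πK))
    (by simp [hFF0]) fun i hi => by
      rw [hu, ← pow_add, map_sub, coeff_C, if_neg hi, sub_zero]
      exact pow_add_dvd_coeff_of_le_insepIdx hν.le ha0 hFFcoeff (hiL _ (min_le_left _ _)).le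
        (min_le_left _ _) hi fun h => (padicValNat_le_nat_log i).trans (by omega)
  have hgen (j : ℕ) (hj : j ∈ Finset.range (ν + 1)) : C (πL ^ iL j) * X ^ p ^ j ∈
      Ideal.span {f : PowerSeries OL | ∃ j ≤ ν, f = C (πL ^ iL j) * X ^ (p ^ j)} :=
    Ideal.subset_span ⟨j, Nat.lt_succ_iff.1 (Finset.mem_range.1 hj), rfl⟩
  refine ⟨hg ▸ Ideal.sum_mem _ fun j hj => ?_, ?_⟩
  · rw [hu, map_mul, mul_assoc (C _)]
    exact Ideal.mul_mem_right _ _ (Ideal.mul_mem_mul (Ideal.mem_span_singleton_self _) (hgen j hj))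
  · have hS := IsLocalRing.exists_mem_sub_algebraMap_mem hTRbij.surjOn
      (fun y => algebraMap_mem_span_of_dvd hπK
        ((dvd_pow_self πL (by omega)).trans (Associated.dvd' ⟨u, hu⟩)))
      (by simpa [(IsDiscreteValuationRing.irreducible_iff_uniformizer πL).1 hπL] using hres)
    obtain ⟨r, hr, hδ⟩ := exists_eq_C_mul_one_add_sum_add_mem (algebraMap OK OL) hS hgen
      (sub_eq_iff_eq_add'.1 hg)
    exact ⟨r, fun j _ => hr j, hδ⟩

open PowerSeries in
/-- One has `F̂(π_L(1+ε)) ≡ π_K` modulo the ideal `π_L^n·I_F` of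
`O_L[[ε]]`, where `I_F = (π_L^{i_0} ε, π_L^{i_1} ε^p, …, π_L^{i_ν} ε^{p^ν})`.
Equivalently, there exist `r_0, …, r_ν ∈ R` and `δ_F ∈ (π_L, ε)·I_F` such that
`F̂(π_L(1+ε)) = π_K·(1 + Σ_{j} r_j π_L^{i_j} ε^{p^j} + δ_F)`. -/
theorem stmt18
    (p : ℕ) [hp : Fact p.Prime]
    -- the ring of integers of K : complete DVR with perfect residue field of char p
    (OK : Type) [CommRing OK] [IsDomain OK] [IsDiscreteValuationRing OK]
    [IsAdicComplete (IsLocalRing.maximalIdeal OK) OK]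
    [CharP (IsLocalRing.ResidueField OK) p] [PerfectRing (IsLocalRing.ResidueField OK) p]
    -- the ring of integers of L
    (OL : Type) [CommRing OL] [IsDomain OL] [IsDiscreteValuationRing OL]
    [IsAdicComplete (IsLocalRing.maximalIdeal OL) OL]
    [Algebra OK OL]
    -- the fields K and L
    (K L : Type) [Field K] [Field L]
    [Algebra OK K] [IsFractionRing OK K]
    [Algebra OL L] [IsFractionRing OL L]
    [Algebra K L] [Algebra OK L] [IsScalarTower OK K L] [IsScalarTower OK OL L]
    -- L/K is finite separable of degree n = a·p^ν with p ∤ a, n > 1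
    [Algebra.IsSeparable K L] [FiniteDimensional K L]
    (n a ν : ℕ) (hna : n = a * p ^ ν) (hpa : ¬ p ∣ a) (hn1 : 1 < n)
    (hdeg : Module.finrank K L = n)
    -- uniformizers; L/K is totally ramified
    (πK : OK) (hπK : Irreducible πK) (πL : OL) (hπL : Irreducible πL)
    (htot : Associated (algebraMap OK OL πK) (πL ^ n))
    (hres : ∀ x : OL, ∃ y : OK, x - algebraMap OK OL y ∈ IsLocalRing.maximalIdeal OL)
    -- Teichmüller representatives
    (TR : Set OK) (hTR0 : (0 : OK) ∈ TR)
    (hTRbij : Set.BijOn (IsLocalRing.residue OK) TR Set.univ)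
    (hTRmul : ∀ r ∈ TR, ∀ s ∈ TR, r * s ∈ TR)
    -- the series F̂(X) = Σ_h a_h X^{h+n} with π_K = F̂(π_L)
    (aF : ℕ → OK) (haF : ∀ h, aF h ∈ TR)
    (hFeval : ∀ N : ℕ,
      algebraMap OK OL πK - ∑ h ∈ Finset.range N, algebraMap OK OL (aF h) * πL ^ (h + n)
        ∈ Ideal.span {πL ^ (n + N)})
    -- the indices of inseparability (finite since L/K is separable)
    (iL : ℕ → ℕ)
    (hiL : ∀ j ≤ ν, (iL j : ℕ∞) = insepIdx p n ν aF (piVal πL (p : OL)) j)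
    -- FF = F̂(π_L(1+ε)) ∈ O_L[[ε]], coefficientwise (as a π_L-adic limit)
    (FF : PowerSeries OL)
    (hFFcoeff : ∀ i N : ℕ,
      PowerSeries.coeff (R := OL) i FF
          - ∑ t ∈ Finset.range N,
              algebraMap OK OL (aF t) * πL ^ (t + n) * ((t + n).choose i : OL)
        ∈ Ideal.span {πL ^ (n + N)}) :
    (FF - (C (R := OL)) (algebraMap OK OL πK) ∈
        Ideal.span {(C (R := OL)) (πL ^ n)} *
          Ideal.span {f : PowerSeries OL | ∃ j ≤ ν,
            f = (C (R := OL)) (πL ^ iL j) * (X : PowerSeries OL) ^ (p ^ j)}) ∧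
    (∃ r : ℕ → OK, (∀ j ≤ ν, r j ∈ TR) ∧
      ∃ δF ∈ Ideal.span {(C (R := OL)) πL, (X : PowerSeries OL)} *
          Ideal.span {f : PowerSeries OL | ∃ j ≤ ν,
            f = (C (R := OL)) (πL ^ iL j) * (X : PowerSeries OL) ^ (p ^ j)},
        FF = (C (R := OL)) (algebraMap OK OL πK) *
          (1 + ∑ j ∈ Finset.range (ν + 1),
              (C (R := OL)) (algebraMap OK OL (r j) * πL ^ iL j) * (X : PowerSeries OL) ^ (p ^ j)
            + δF)) :=
  stmt18_general p (hp := hp) OK OL n a ν hna hpa hn1 πK hπK πL hπL htot hres TR hTRbij aF hFeval iL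
    hiL FF hFFcoeff
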